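/- Substitution lemma (Lemma 1): Let I be an interpretation into saturated sets, t' a normal λ-term with x₁:B₁,…,xₙ:Bₙ ⊢_F t' : A, and t a λ-term with t ≃_β t'. If uᵢ ∈ |Bᵢ|_I for 1 ≤ i ≤ n, then t[u₁/x₁,…,uₙ/xₙ] ∈ |A|_I. -/

import Mathlib

/-! Untyped λ-calculus (de Bruijn) and System F realizability semantics. -/

/-- Untyped λ-terms in de Bruijn notation. -/
inductive Lam : Type
  | var : ℕ → Lam
  | app : Lam → Lam → Lam
  | lam : Lam → Lam
deriving DecidableEq

namespace Lam

/-- Shift the free variables ≥ `d` up by one. -/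
def lift (d : ℕ) : Lam → Lam
  | var n => if n < d then var n else var (n + 1)
  | app t u => app (lift d t) (lift d u)
  | lam t => lam (lift (d + 1) t)

/-- Capture-avoiding substitution of `u` for the variable `k` (de Bruijn). -/
def subst : Lam → ℕ → Lam → Lam
  | var n, k, u => if n = k then u else if k < n then var (n - 1) else var n
  | app t s, k, u => app (subst t k u) (subst s k u)
  | lam t, k, u => lam (subst t (k + 1) (lift 0 u))

/-- Free variables of a term. -/
def fv : Lam → Finset ℕ
  | var n => {n}
  | app t u => fv t ∪ fv u
  | lam t => ((fv t).erase 0).image (· - 1)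

/-- One-step β-reduction. -/
inductive Beta : Lam → Lam → Prop
  | beta (t u : Lam) : Beta (app (lam t) u) (subst t 0 u)
  | appL {t t' : Lam} (u : Lam) : Beta t t' → Beta (app t u) (app t' u)
  | appR (t : Lam) {u u' : Lam} : Beta u u' → Beta (app t u) (app t u')
  | lam {t t' : Lam} : Beta t t' → Beta (lam t) (lam t')

/-- Many-step β-reduction. -/
def BetaStar : Lam → Lam → Prop := Relation.ReflTransGen Beta

/-- β-equivalence. -/
def BetaEq : Lam → Lam → Prop := Relation.EqvGen Beta

/-- One-step η-reduction. -/
inductive Eta : Lam → Lam → Prop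
  | eta (t : Lam) : Eta (lam (app (lift 0 t) (var 0))) t
  | appL {t t' : Lam} (u : Lam) : Eta t t' → Eta (app t u) (app t' u)
  | appR (t : Lam) {u u' : Lam} : Eta u u' → Eta (app t u) (app t u')
  | lam {t t' : Lam} : Eta t t' → Eta (lam t) (lam t')

/-- βη-equivalence. -/
def BetaEtaEq : Lam → Lam → Prop := Relation.EqvGen (fun t u => Beta t u ∨ Eta t u)

/-- One-step weak head reduction: contracts the weak head redex `(λ t) u`
possibly applied to further arguments. -/
inductive Whr : Lam → Lam → Prop
  | head (t u : Lam) : Whr (app (lam t) u) (subst t 0 u)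
  | appL {t t' : Lam} (u : Lam) : Whr t t' → Whr (app t u) (app t' u)

/-- Many-step weak head reduction (`≻_f`). -/
def WhrStar : Lam → Lam → Prop := Relation.ReflTransGen Whr

/-- A term is normal when it has no β-redex. -/
def Normal (t : Lam) : Prop := ∀ u, ¬ Beta t u

def Normalizable (t : Lam) : Prop := ∃ u, BetaStar t u ∧ Normal u

/-- `(t)v₁…vₘ`. -/
def appList (t : Lam) (l : List Lam) : Lam := l.foldl app t

end Lam

/-- A set of λ-terms is saturated when it is closed under weak-head-expansion. -/
def Saturated (G : Set Lam) : Prop := ∀ t u : Lam, Lam.WhrStar t u → u ∈ G → t ∈ G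

/-- A set of λ-terms is β-saturated when it is closed under β-expansion. -/
def BetaSaturated (G : Set Lam) : Prop := ∀ t u : Lam, Lam.BetaStar t u → u ∈ G → t ∈ G

/-- `G → G' = {u : ∀ t ∈ G, (u)t ∈ G'}`. -/
def arrowSet (G G' : Set Lam) : Set Lam := {u | ∀ t ∈ G, Lam.app u t ∈ G'}

/-- Types of System F (de Bruijn type variables). -/
inductive Ty : Type
  | var : ℕ → Ty
  | arr : Ty → Ty → Ty
  | all : Ty → Ty
deriving DecidableEq

namespace Ty

/-- Shift the free type variables ≥ `d` up by one. -/
def lift (d : ℕ) : Ty → Ty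
  | var n => if n < d then var n else var (n + 1)
  | arr A B => arr (lift d A) (lift d B)
  | all A => all (lift (d + 1) A)

/-- Capture-avoiding substitution of the type `C` for the type variable `k`. -/
def subst : Ty → ℕ → Ty → Ty
  | var n, k, C => if n = k then C else if k < n then var (n - 1) else var n
  | arr A B, k, C => arr (subst A k C) (subst B k C)
  | all A, k, C => all (subst A (k + 1) (lift 0 C))

/-- Free type variables. -/
def fv : Ty → Finset ℕ
  | var n => {n}
  | arr A B => fv A ∪ fv B
  | all A => ((fv A).erase 0).image (· - 1)

end Ty

mutual
  /-- ∀⁺ types: types with positive quantifiers. -/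
  inductive PosTy : Ty → Prop
    | var (n : ℕ) : PosTy (Ty.var n)
    | arr {B A : Ty} : NegTy B → PosTy A → PosTy (Ty.arr B A)
    | all {A : Ty} : PosTy A → 0 ∈ A.fv → PosTy (Ty.all A)
  /-- ∀⁻ types: types with negative quantifiers. -/
  inductive NegTy : Ty → Prop
    | var (n : ℕ) : NegTy (Ty.var n)
    | arr {B A : Ty} : PosTy B → NegTy A → NegTy (Ty.arr B A)
end

/-- Typing contexts: a partial assignment of types to (de Bruijn) term variables. -/
def Ctx : Type := ℕ → Option Ty

def Ctx.empty : Ctx := fun _ => none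

def Ctx.cons (B : Ty) (Γ : Ctx) : Ctx := fun n =>
  match n with
  | 0 => some B
  | n + 1 => Γ n

/-- Shift all type variables of a context (used for ∀-introduction: the fresh
type variable `0` does not occur in the shifted context). -/
def Ctx.liftTy (Γ : Ctx) : Ctx := fun n => (Γ n).map (Ty.lift 0)

/-- Curry-style typing of System F. -/
inductive TyJ : Ctx → Lam → Ty → Prop
  | var {Γ : Ctx} {x : ℕ} {A : Ty} : Γ x = some A → TyJ Γ (Lam.var x) A
  | lam {Γ : Ctx} {B C : Ty} {t : Lam} :
      TyJ (Ctx.cons B Γ) t C → TyJ Γ (Lam.lam t) (Ty.arr B C)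
  | app {Γ : Ctx} {B C : Ty} {u v : Lam} :
      TyJ Γ u (Ty.arr B C) → TyJ Γ v B → TyJ Γ (Lam.app u v) C
  | allI {Γ : Ctx} {A : Ty} {t : Lam} :
      TyJ (Ctx.liftTy Γ) t A → TyJ Γ t (Ty.all A)
  | allE {Γ : Ctx} {A : Ty} {t : Lam} (C : Ty) :
      TyJ Γ t (Ty.all A) → TyJ Γ t (Ty.subst A 0 C)

/-- System F0 : System F where ∀-elimination only instantiates by type variables. -/
inductive TyJ0 : Ctx → Lam → Ty → Prop
  | var {Γ : Ctx} {x : ℕ} {A : Ty} : Γ x = some A → TyJ0 Γ (Lam.var x) A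
  | lam {Γ : Ctx} {B C : Ty} {t : Lam} :
      TyJ0 (Ctx.cons B Γ) t C → TyJ0 Γ (Lam.lam t) (Ty.arr B C)
  | app {Γ : Ctx} {B C : Ty} {u v : Lam} :
      TyJ0 Γ u (Ty.arr B C) → TyJ0 Γ v B → TyJ0 Γ (Lam.app u v) C
  | allI {Γ : Ctx} {A : Ty} {t : Lam} :
      TyJ0 (Ctx.liftTy Γ) t A → TyJ0 Γ t (Ty.all A)
  | allE {Γ : Ctx} {A : Ty} {t : Lam} (Y : ℕ) :
      TyJ0 Γ t (Ty.all A) → TyJ0 Γ t (Ty.subst A 0 (Ty.var Y))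

/-- Interpretations: assignments of sets of λ-terms to type variables. -/
def Interp : Type := ℕ → Set Lam

def Interp.cons (G : Set Lam) (I : Interp) : Interp := fun n =>
  match n with
  | 0 => G
  | n + 1 => I n

/-- Interpretation of types, parameterized by the admissibility class `C` of
sets used to interpret type variables (e.g. `Saturated`). -/
def interpC (C : Set Lam → Prop) : Ty → Interp → Set Lam
  | Ty.var n, I => I n
  | Ty.arr A B, I => arrowSet (interpC C A I) (interpC C B I)
  | Ty.all A, I => ⋂ (G : Set Lam) (_ : C G), interpC C A (Interp.cons G I)

/-- Girard–Krivine interpretation `|A|_I` with saturated sets. -/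
def interp : Ty → Interp → Set Lam := interpC Saturated

/-- `|A|`, the intersection of `|A|_I` over all admissible interpretations. -/
def SemC (C : Set Lam → Prop) (A : Ty) : Set Lam :=
  {t | ∀ I : Interp, (∀ n, C (I n)) → t ∈ interpC C A I}

/-- `|A| = ⋂_I |A|_I` over interpretations into saturated sets. -/
def Sem (A : Ty) : Set Lam := SemC Saturated A

/-- A simultaneous substitution shifted under a binder. -/
def liftSub (σ : ℕ → Lam) : ℕ → Lam := fun n =>
  match n with
  | 0 => Lam.var 0
  | n + 1 => Lam.lift 0 (σ n)

/-- Simultaneous (capture-avoiding) substitution `t[σ]`. -/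
def msubst (σ : ℕ → Lam) : Lam → Lam
  | Lam.var n => σ n
  | Lam.app t u => Lam.app (msubst σ t) (msubst σ u)
  | Lam.lam t => Lam.lam (msubst (liftSub σ) t)

/-! By Church–Rosser (proved with Takahashi's complete developments), `t ≃_β t'` with `t'`
normal gives `t →_β* t'`; so it suffices to show `t[σ] ∈ |A|_I` whenever `t →_β* t'` and
`Γ ⊢ t' : A`, by induction on the typing derivation of `t'`.

Saturated sets are only closed under weak head expansion, so the induction rests on
standardization: `t →_β* t'` factors as `t ≻_f L` followed by an internal reduction `L → t'`,
which keeps the outermost constructor and reduces the immediate subterms. The induction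
hypotheses then apply to the subterms of `L`, and saturation carries `L[σ] ∈ |A|_I` back to
`t[σ]`, because weak head reduction is stable under substitution. -/

namespace Lam

def upRen (ρ : ℕ → ℕ) : ℕ → ℕ
  | 0 => 0
  | n + 1 => ρ n + 1

def rename (ρ : ℕ → ℕ) : Lam → Lam
  | var n => var (ρ n)
  | app t u => app (rename ρ t) (rename ρ u)
  | lam t => lam (rename (upRen ρ) t)

theorem lift_eq_rename (d : ℕ) (t : Lam) :
    lift d t = rename (fun n => if n < d then n else n + 1) t := by
  induction t generalizing d with
  | var n => simp only [lift, rename]; split <;> rfl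
  | app a b iha ihb => simp only [lift, rename, iha, ihb]
  | lam s ih =>
    simp only [lift, rename, ih]
    congr 2; funext n
    cases n with
    | zero => rfl
    | succ m => simp only [upRen]; split <;> split <;> omega

theorem lift_zero_eq_rename_succ (t : Lam) : lift 0 t = rename Nat.succ t := by
  simp [lift_eq_rename]

theorem rename_rename (ρ ρ' : ℕ → ℕ) (t : Lam) :
    rename ρ (rename ρ' t) = rename (ρ ∘ ρ') t := by
  induction t generalizing ρ ρ' with
  | var n => rfl
  | app a b iha ihb => simp only [rename, iha, ihb]
  | lam s ih =>
    simp only [rename, ih]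
    congr 2; funext n
    cases n <;> rfl

theorem liftSub_succ (σ : ℕ → Lam) (n : ℕ) : liftSub σ (n + 1) = rename Nat.succ (σ n) :=
  lift_zero_eq_rename_succ _

theorem msubst_rename (σ : ℕ → Lam) (ρ : ℕ → ℕ) (t : Lam) :
    msubst σ (rename ρ t) = msubst (σ ∘ ρ) t := by
  induction t generalizing σ ρ with
  | var n => rfl
  | app a b iha ihb => simp only [rename, msubst, iha, ihb]
  | lam s ih =>
    simp only [rename, msubst, ih]
    congr 2; funext n
    cases n <;> rfl

theorem rename_msubst (ρ : ℕ → ℕ) (σ : ℕ → Lam) (t : Lam) :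
    rename ρ (msubst σ t) = msubst (rename ρ ∘ σ) t := by
  induction t generalizing σ ρ with
  | var n => rfl
  | app a b iha ihb => simp only [rename, msubst, iha, ihb]
  | lam s ih =>
    simp only [rename, msubst, ih]
    congr 2; funext n
    cases n with
    | zero => rfl
    | succ m => simp only [Function.comp, liftSub_succ, rename_rename]; rfl

theorem msubst_msubst (σ τ : ℕ → Lam) (t : Lam) :
    msubst σ (msubst τ t) = msubst (msubst σ ∘ τ) t := by
  induction t generalizing σ τ with
  | var n => rfl
  | app a b iha ihb => simp only [msubst, iha, ihb]
  | lam s ih =>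
    simp only [msubst, ih]
    congr 2; funext n
    cases n with
    | zero => rfl
    | succ m =>
      have : liftSub σ ∘ Nat.succ = rename Nat.succ ∘ σ := funext (liftSub_succ σ)
      simp only [Function.comp_apply, liftSub_succ, msubst_rename, rename_msubst, this]

theorem msubst_var (t : Lam) : msubst var t = t := by
  induction t with
  | var n => rfl
  | app a b iha ihb => simp only [msubst, iha, ihb]
  | lam s ih =>
    have : liftSub var = var := by funext n; cases n <;> rfl
    simp only [msubst, this, ih]

def consSub (u : Lam) (σ : ℕ → Lam) : ℕ → Lam
  | 0 => u
  | n + 1 => σ n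

def singleSub (k : ℕ) (u : Lam) (n : ℕ) : Lam :=
  if n = k then u else if k < n then var (n - 1) else var n

theorem subst_eq_msubst_singleSub (t : Lam) (k : ℕ) (u : Lam) :
    subst t k u = msubst (singleSub k u) t := by
  induction t generalizing k u with
  | var n => rfl
  | app a b iha ihb => simp only [subst, msubst, iha, ihb]
  | lam s ih =>
    simp only [subst, msubst, ih]
    congr 2; funext n
    cases n with
    | zero => simp [singleSub, liftSub]
    | succ m =>
      simp only [singleSub, liftSub]
      split_ifs <;> simp_all [lift]; omega

theorem subst_zero_eq_msubst (t u : Lam) : subst t 0 u = msubst (consSub u var) t := by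
  rw [subst_eq_msubst_singleSub]
  congr 1; funext n
  cases n <;> simp [singleSub, consSub]

theorem subst_zero_msubst_liftSub (σ : ℕ → Lam) (s u : Lam) :
    subst (msubst (liftSub σ) s) 0 u = msubst (consSub u σ) s := by
  rw [subst_zero_eq_msubst, msubst_msubst]
  congr 1; funext n
  cases n with
  | zero => rfl
  | succ m =>
    simp only [Function.comp, liftSub_succ, msubst_rename]
    exact msubst_var (σ m)

theorem msubst_subst_zero (σ : ℕ → Lam) (s u : Lam) :
    msubst σ (subst s 0 u) = subst (msubst (liftSub σ) s) 0 (msubst σ u) := by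
  rw [subst_zero_msubst_liftSub, subst_zero_eq_msubst, msubst_msubst]
  congr 1; funext n
  cases n <;> rfl

theorem rename_subst_zero (ρ : ℕ → ℕ) (s u : Lam) :
    rename ρ (subst s 0 u) = subst (rename (upRen ρ) s) 0 (rename ρ u) := by
  rw [subst_zero_eq_msubst, subst_zero_eq_msubst, rename_msubst, msubst_rename]
  congr 1; funext n
  cases n <;> rfl

end Lam

namespace Lam

theorem BetaStar.app {a a' b b' : Lam} (ha : BetaStar a a') (hb : BetaStar b b') :
    BetaStar (app a b) (app a' b') :=
  (Relation.ReflTransGen.lift (Lam.app · b) (fun _ _ h => Beta.appL b h) _ _ ha).trans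
    (Relation.ReflTransGen.lift (Lam.app a') (fun _ _ h => Beta.appR a' h) _ _ hb)

theorem BetaStar.lam {s s' : Lam} (h : BetaStar s s') : BetaStar (lam s) (lam s') :=
  Relation.ReflTransGen.lift Lam.lam (fun _ _ h => Beta.lam h) _ _ h

theorem WhrStar.appL {a a' : Lam} (h : WhrStar a a') (b : Lam) :
    WhrStar (app a b) (app a' b) :=
  Relation.ReflTransGen.lift (app · b) (fun _ _ h => Whr.appL b h) _ _ h

theorem Whr.msubst {t u : Lam} (σ : ℕ → Lam) (h : Whr t u) :
    Whr (msubst σ t) (msubst σ u) := by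
  induction h with
  | head s b =>
    rw [_root_.msubst, _root_.msubst, msubst_subst_zero]
    exact Whr.head _ _
  | appL b _ ih => exact Whr.appL _ ih

theorem WhrStar.msubst {t u : Lam} (σ : ℕ → Lam) (h : WhrStar t u) :
    WhrStar (msubst σ t) (msubst σ u) :=
  Relation.ReflTransGen.lift (_root_.msubst σ) (fun _ _ h => Whr.msubst σ h) _ _ h

inductive Par : Lam → Lam → Prop
  | var (n : ℕ) : Par (var n) (var n)
  | app {a a' b b' : Lam} : Par a a' → Par b b' → Par (app a b) (app a' b')
  | lam {s s' : Lam} : Par s s' → Par (lam s) (lam s')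
  | beta {s s' b b' : Lam} : Par s s' → Par b b' → Par (app (lam s) b) (subst s' 0 b')

theorem Par.refl (t : Lam) : Par t t := by
  induction t with
  | var n => exact Par.var n
  | app a b iha ihb => exact Par.app iha ihb
  | lam s ih => exact Par.lam ih

theorem Beta.par {t u : Lam} (h : Beta t u) : Par t u := by
  induction h with
  | beta t u => exact Par.beta (Par.refl t) (Par.refl u)
  | appL u _ ih => exact Par.app ih (Par.refl u)
  | appR t _ ih => exact Par.app (Par.refl t) ih
  | lam _ ih => exact Par.lam ih

theorem Par.betaStar {t u : Lam} (h : Par t u) : BetaStar t u := by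
  induction h with
  | var n => exact Relation.ReflTransGen.refl
  | app _ _ iha ihb => exact iha.app ihb
  | lam _ ih => exact ih.lam
  | @beta s s' b b' _ _ ihs ihb => exact (ihs.lam.app ihb).tail (Beta.beta s' b')

theorem Par.rename {t u : Lam} (ρ : ℕ → ℕ) (h : Par t u) :
    Par (rename ρ t) (rename ρ u) := by
  induction h generalizing ρ with
  | var n => exact Par.refl _
  | app _ _ iha ihb => exact Par.app (iha ρ) (ihb ρ)
  | lam _ ih => exact Par.lam (ih _)
  | beta _ _ ihs ihb =>
    rw [Lam.rename, Lam.rename, rename_subst_zero]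
    exact Par.beta (ihs _) (ihb ρ)

theorem Par.liftSub {σ σ' : ℕ → Lam} (hσ : ∀ n, Par (σ n) (σ' n)) (n : ℕ) :
    Par (liftSub σ n) (liftSub σ' n) := by
  cases n with
  | zero => exact Par.refl _
  | succ m => rw [liftSub_succ, liftSub_succ]; exact (hσ m).rename _

theorem Par.msubst {t u : Lam} {σ σ' : ℕ → Lam} (hσ : ∀ n, Par (σ n) (σ' n))
    (h : Par t u) : Par (msubst σ t) (msubst σ' u) := by
  induction h generalizing σ σ' with
  | var n => exact hσ n
  | app _ _ iha ihb => exact Par.app (iha hσ) (ihb hσ)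
  | lam _ ih => exact Par.lam (ih (Par.liftSub hσ))
  | beta _ _ ihs ihb =>
    rw [_root_.msubst, _root_.msubst, msubst_subst_zero]
    exact Par.beta (ihs (Par.liftSub hσ)) (ihb hσ)

theorem Par.consSub_var {b b' : Lam} (hb : Par b b') (n : ℕ) :
    Par (consSub b Lam.var n) (consSub b' Lam.var n) := by
  cases n with
  | zero => exact hb
  | succ m => exact Par.var m

theorem Par.subst_zero {s s' b b' : Lam} (hs : Par s s') (hb : Par b b') :
    Par (subst s 0 b) (subst s' 0 b') := by
  rw [subst_zero_eq_msubst, subst_zero_eq_msubst]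
  exact hs.msubst hb.consSub_var

def completeDevelopment : Lam → Lam
  | var n => var n
  | lam t => lam (completeDevelopment t)
  | app (lam t) u => subst (completeDevelopment t) 0 (completeDevelopment u)
  | app (var n) u => app (var n) (completeDevelopment u)
  | app (app a b) u => app (completeDevelopment (app a b)) (completeDevelopment u)

theorem Par.par_completeDevelopment {t u : Lam} (h : Par t u) :
    Par u (completeDevelopment t) := by
  induction h with
  | var n => exact Par.var n
  | @app a a' b b' ha hb iha ihb =>
    cases a with
    | var n => cases ha; exact Par.app iha ihb
    | app c d => exact Par.app iha ihb
    | lam s =>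
      cases ha with
      | lam hs =>
        cases iha with
        | lam ihs => exact Par.beta ihs ihb
  | lam _ ih => exact Par.lam ih
  | beta _ _ ihs ihb => exact Par.subst_zero ihs ihb

theorem BetaEq.exists_betaStar {t u : Lam} (h : BetaEq t u) :
    ∃ v, BetaStar t v ∧ BetaStar u v := by
  have hjoin : Equivalence (Relation.Join (Relation.ReflTransGen Par)) :=
    Relation.equivalence_join_reflTransGen fun a _ _ hb hc =>
      ⟨completeDevelopment a, .single hb.par_completeDevelopment,
        .single hc.par_completeDevelopment⟩
  have parStar_betaStar : ∀ {a b}, Relation.ReflTransGen Par a b → BetaStar a b :=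
    fun h => Relation.ReflTransGen.lift' id (fun _ _ hp => Par.betaStar hp) _ _ h
  obtain ⟨v, htv, huv⟩ := hjoin.eqvGen_iff.1
    (Relation.EqvGen.mono (fun a b hab => ⟨b, .single hab.par, .refl⟩) _ _ h)
  exact ⟨v, parStar_betaStar htv, parStar_betaStar huv⟩

theorem BetaEq.betaStar_of_normal {t u : Lam} (h : BetaEq t u) (hu : Normal u) :
    BetaStar t u := by
  obtain ⟨v, htv, huv⟩ := h.exists_betaStar
  rcases huv.cases_head with rfl | ⟨w, huw, -⟩
  · exact htv
  · exact absurd huw (hu w)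

end Lam

namespace Lam

/-- A parallel step that leaves the weak head redex, if any, uncontracted. -/
inductive InternalPar : Lam → Lam → Prop
  | var (n : ℕ) : InternalPar (var n) (var n)
  | lam {s s' : Lam} : Par s s' → InternalPar (lam s) (lam s')
  | app {a a' b b' : Lam} : InternalPar a a' → Par b b' → InternalPar (app a b) (app a' b')

theorem InternalPar.par {t u : Lam} (h : InternalPar t u) : Par t u := by
  induction h with
  | var n => exact Par.var n
  | lam hs => exact Par.lam hs
  | app _ hb ih => exact Par.app ih hb

theorem InternalPar.exists_whrStar_msubst {t u : Lam} (h : InternalPar t u) {σ σ' : ℕ → Lam}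
    (hpar : ∀ n, Par (σ n) (σ' n))
    (hstd : ∀ n, ∃ v, WhrStar (σ n) v ∧ InternalPar v (σ' n)) :
    ∃ v, WhrStar (msubst σ t) v ∧ InternalPar v (msubst σ' u) := by
  induction h with
  | var n => exact hstd n
  | lam hs => exact ⟨_, .refl, InternalPar.lam (hs.msubst (Par.liftSub hpar))⟩
  | app _ hb ih =>
    obtain ⟨v, htv, hvu⟩ := ih
    exact ⟨_, htv.appL _, InternalPar.app hvu (hb.msubst hpar)⟩

/-- Takahashi's main lemma. -/
theorem Par.exists_whrStar_internalPar {t u : Lam} (h : Par t u) :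
    ∃ v, WhrStar t v ∧ InternalPar v u := by
  induction h with
  | var n => exact ⟨_, .refl, InternalPar.var n⟩
  | app _ hb iha _ =>
    obtain ⟨v, hav, hva⟩ := iha
    exact ⟨_, hav.appL _, InternalPar.app hva hb⟩
  | lam hs => exact ⟨_, .refl, InternalPar.lam hs⟩
  | @beta s s' b b' _ hb ihs ihb =>
    obtain ⟨v, hsv, hvs⟩ := ihs
    have hstd : ∀ n, ∃ w, WhrStar (consSub b Lam.var n) w ∧
        InternalPar w (consSub b' Lam.var n)
      | 0 => ihb
      | m + 1 => ⟨_, .refl, InternalPar.var m⟩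
    obtain ⟨w, hvw, hwu⟩ := hvs.exists_whrStar_msubst hb.consSub_var hstd
    rw [subst_zero_eq_msubst]
    refine ⟨w, .head (Whr.head s b) ?_, hwu⟩
    rw [subst_zero_eq_msubst]
    exact (hsv.msubst _).trans hvw

theorem InternalPar.exists_whrStar_par_of_whr {t u v : Lam} (h : InternalPar t u) (huv : Whr u v) :
    ∃ w, WhrStar t w ∧ Par w v := by
  induction h generalizing v with
  | var n => cases huv
  | lam _ => cases huv
  | @app a a' b b' ha hb iha =>
    cases huv with
    | head s u =>
      cases ha with
      | lam hs => exact ⟨_, .single (Whr.head _ _), hs.subst_zero hb⟩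
    | appL _ hw =>
      obtain ⟨w, haw, hwv⟩ := iha hw
      exact ⟨_, haw.appL b, Par.app hwv hb⟩

theorem Par.exists_whrStar_par_of_whrStar {u v : Lam} (huv : WhrStar u v) {t : Lam}
    (htu : Par t u) : ∃ w, WhrStar t w ∧ Par w v := by
  induction huv using Relation.ReflTransGen.head_induction_on generalizing t with
  | refl => exact ⟨t, .refl, htu⟩
  | head huu' _ ih =>
    obtain ⟨w₁, htw₁, hw₁u⟩ := htu.exists_whrStar_internalPar
    obtain ⟨w₂, hw₁w₂, hw₂u'⟩ := hw₁u.exists_whrStar_par_of_whr huu'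
    obtain ⟨w, hw₂w, hwv⟩ := ih hw₂u'
    exact ⟨w, (htw₁.trans hw₁w₂).trans hw₂w, hwv⟩

/-- β-reduction that keeps the outermost constructor and, for an application, reduces the
function part again internally. -/
inductive InternalStar : Lam → Lam → Prop
  | var (n : ℕ) : InternalStar (var n) (var n)
  | lam {s s' : Lam} : BetaStar s s' → InternalStar (lam s) (lam s')
  | app {a a' b b' : Lam} :
      InternalStar a a' → BetaStar b b' → InternalStar (app a b) (app a' b')

theorem InternalStar.refl (t : Lam) : InternalStar t t := by
  induction t with
  | var n => exact InternalStar.var n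
  | app a b iha _ => exact InternalStar.app iha .refl
  | lam s _ => exact InternalStar.lam .refl

theorem InternalStar.betaStar {t u : Lam} (h : InternalStar t u) : BetaStar t u := by
  induction h with
  | var n => exact .refl
  | lam hs => exact hs.lam
  | app _ hb ih => exact ih.app hb

theorem InternalPar.trans_internalStar {t u v : Lam} (htu : InternalPar t u)
    (huv : InternalStar u v) : InternalStar t v := by
  induction huv generalizing t with
  | var n =>
    cases htu
    exact InternalStar.var n
  | lam hs =>
    cases htu with
    | lam hp => exact InternalStar.lam (hp.betaStar.trans hs)
  | app _ hb ih =>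
    cases htu with
    | app ha hp => exact InternalStar.app (ih ha) (hp.betaStar.trans hb)

theorem BetaStar.exists_whrStar_internalStar {t u : Lam} (h : BetaStar t u) :
    ∃ v, WhrStar t v ∧ InternalStar v u := by
  induction h using Relation.ReflTransGen.head_induction_on with
  | refl => exact ⟨u, .refl, InternalStar.refl u⟩
  | head htt' _ ih =>
    obtain ⟨v, ht'v, hvu⟩ := ih
    obtain ⟨w, htw, hwv⟩ := Par.exists_whrStar_par_of_whrStar ht'v htt'.par
    obtain ⟨x, hwx, hxv⟩ := hwv.exists_whrStar_internalPar
    exact ⟨x, htw.trans hwx, hxv.trans_internalStar hvu⟩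

end Lam

namespace Interp

def dropAt (d : ℕ) (I : Interp) : Interp := fun n => if n < d then I n else I (n + 1)

def insertAt (k : ℕ) (G : Set Lam) (I : Interp) : Interp := fun n =>
  if n < k then I n else if n = k then G else I (n - 1)

theorem dropAt_zero_cons (G : Set Lam) (I : Interp) : (cons G I).dropAt 0 = I := rfl

theorem dropAt_succ_cons (d : ℕ) (G : Set Lam) (I : Interp) :
    (cons G I).dropAt (d + 1) = cons G (I.dropAt d) := by
  funext n
  cases n with
  | zero => rfl
  | succ m => simp only [dropAt, cons, Nat.add_lt_add_iff_right]

theorem insertAt_zero (G : Set Lam) (I : Interp) : I.insertAt 0 G = cons G I := by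
  funext n
  cases n <;> simp [insertAt, cons]

theorem insertAt_succ_cons (k : ℕ) (G G' : Set Lam) (I : Interp) :
    (cons G I).insertAt (k + 1) G' = cons G (I.insertAt k G') := by
  funext n
  cases n with
  | zero => simp [insertAt, cons]
  | succ m =>
    simp only [insertAt, cons, Nat.add_lt_add_iff_right, Nat.add_right_cancel_iff]
    split_ifs
    · rfl
    · rfl
    · obtain ⟨j, rfl⟩ : ∃ j, m = j + 1 := ⟨m - 1, by omega⟩
      rfl

end Interp

section Semantics

variable {C : Set Lam → Prop}

theorem interpC_lift (A : Ty) (d : ℕ) (I : Interp) :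
    interpC C (A.lift d) I = interpC C A (I.dropAt d) := by
  induction A generalizing d I with
  | var n =>
    simp only [Ty.lift]
    split <;> simp [interpC, Interp.dropAt, *]
  | arr A B ihA ihB => simp only [Ty.lift, interpC, ihA, ihB]
  | all A ih => simp only [Ty.lift, interpC, ih, Interp.dropAt_succ_cons]

theorem interpC_lift_zero_cons (A : Ty) (G : Set Lam) (I : Interp) :
    interpC C (A.lift 0) (Interp.cons G I) = interpC C A I := by
  rw [interpC_lift, Interp.dropAt_zero_cons]

theorem interpC_subst (A : Ty) (k : ℕ) (D : Ty) (I : Interp) :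
    interpC C (A.subst k D) I = interpC C A (I.insertAt k (interpC C D I)) := by
  induction A generalizing k D I with
  | var n =>
    simp only [Ty.subst]
    split_ifs <;> simp [interpC, Interp.insertAt, *] <;> omega
  | arr A B ihA ihB => simp only [Ty.subst, interpC, ihA, ihB]
  | all A ih =>
    simp only [Ty.subst, interpC, ih, interpC_lift_zero_cons, Interp.insertAt_succ_cons]

theorem interpC_subst_zero (A D : Ty) (I : Interp) :
    interpC C (A.subst 0 D) I = interpC C A (Interp.cons (interpC C D I) I) := by
  rw [interpC_subst, Interp.insertAt_zero]

end Semantics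

theorem Saturated.cons {G : Set Lam} (hG : Saturated G) {I : Interp}
    (hI : ∀ n, Saturated (I n)) : ∀ n, Saturated (Interp.cons G I n)
  | 0 => hG
  | n + 1 => hI n

theorem saturated_interp (A : Ty) {I : Interp} (hI : ∀ n, Saturated (I n)) :
    Saturated (interp A I) := by
  induction A generalizing I with
  | var n => exact hI n
  | arr B C _ ihC => exact fun t u htu hu s hs => ihC hI _ _ (htu.appL s) (hu s hs)
  | all A ih =>
    intro t u htu hu
    simp only [interp, interpC, Set.mem_iInter] at hu ⊢
    exact fun G hG => ih (hG.cons hI) t u htu (hu G hG)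

open Lam in
theorem msubst_mem_interp_of_betaStar {Γ : Ctx} {t' : Lam} {A : Ty} (ht' : TyJ Γ t' A)
    {I : Interp} (hI : ∀ n, Saturated (I n)) {t : Lam} (htt' : BetaStar t t') {σ : ℕ → Lam}
    (hσ : ∀ n B, Γ n = some B → σ n ∈ interp B I) : msubst σ t ∈ interp A I := by
  induction ht' generalizing I t σ with
  | @var Γ x A hx =>
    obtain ⟨v, htv, hv⟩ := htt'.exists_whrStar_internalStar
    cases hv
    exact saturated_interp A hI _ _ (htv.msubst σ) (hσ x A hx)
  | @lam Γ B C s' _ ih =>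
    obtain ⟨v, htv, hv⟩ := htt'.exists_whrStar_internalStar
    cases hv with
    | @lam s _ hs =>
      intro u hu
      have hσu : ∀ n B', Ctx.cons B Γ n = some B' → consSub u σ n ∈ interp B' I
        | 0, _, rfl => hu
        | n + 1, B', hn => hσ n B' hn
      refine saturated_interp C hI _ _ ?_ (ih hI hs hσu)
      refine ((htv.msubst σ).appL u).tail ?_
      rw [← subst_zero_msubst_liftSub]
      exact Whr.head _ _
  | app _ _ ihu ihv =>
    obtain ⟨v, htv, hv⟩ := htt'.exists_whrStar_internalStar
    cases hv with
    | app ha hb =>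
      exact saturated_interp _ hI _ _ (htv.msubst σ) (ihu hI ha.betaStar hσ _ (ihv hI hb hσ))
  | allI _ ih =>
    simp only [interp, interpC, Set.mem_iInter]
    refine fun G hG => ih (hG.cons hI) htt' fun n B hn => ?_
    obtain ⟨B₀, hB₀, rfl⟩ := Option.map_eq_some_iff.1 hn
    rw [interp, interpC_lift_zero_cons]
    exact hσ n B₀ hB₀
  | allE D _ ih =>
    have h := ih hI htt' hσ
    simp only [interp, interpC, Set.mem_iInter] at h
    rw [interp, interpC_subst_zero]
    exact h _ (saturated_interp D hI)

/-- Lemma 1: if `t'` is normal with `x₁:B₁,…,xₙ:Bₙ ⊢ t' : A`,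
`t ≃_β t'`, and `uᵢ ∈ |Bᵢ|_I`, then `t[u₁/x₁,…,uₙ/xₙ] ∈ |A|_I`. -/
theorem substitution_lemma (I : Interp) (hI : ∀ n, Saturated (I n))
    (Γ : Ctx) (t' : Lam) (A : Ty) (ht' : TyJ Γ t' A) (hnorm : t'.Normal)
    (t : Lam) (heq : Lam.BetaEq t t') (σ : ℕ → Lam)
    (hσ : ∀ n B, Γ n = some B → σ n ∈ interp B I)
    (hid : ∀ n, Γ n = none → σ n = Lam.var n) :
    msubst σ t ∈ interp A I :=
  msubst_mem_interp_of_betaStar ht' hI (heq.betaStar_of_normal hnorm) hσ
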